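/- arXiv:1606.07687 — 8 statements merged into one kernel-verified Lean document; each statement's English description precedes it below -/
import Mathlib

section
/- Let σ be the least solution of the concrete system and assume all concrete and abstract right-hand sides respect the description relation R. Then σ R* σ♯ holds for every post-solution σ♯ of the lower monotonization of the abstract system. -/
/-- The lower monotonization of a (possibly non-monotonic) function
`f : (Y → D) → D`, defined by `f̲ σ = ⨅ { f σ' | σ ≤ σ' }`. -/
def lowerMono {Y D : Type*} [CompleteLattice D] (f : (Y → D) → D) (σ : Y → D) : D :=
  ⨅ σ' ∈ {τ : Y → D | σ ≤ τ}, f σ'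

/-- If `σ` is the least solution of the concrete system `x = f x`, then
`σ R* σ♯` holds for every post-solution `σ♯` of the lower monotonization
of the abstract system `y = f♯ y`. -/
theorem sound_of_post_lowerMono {X Y Q : Type*} {D : Type*} [CompleteLattice D]
    -- concrete system with monotone right-hand sides
    (f : X → (X → Set Q) → Set Q) (hmono : ∀ x, Monotone (f x))
    -- Galois connection between `Set Q` and `D`
    (α : Set Q → D) (γ : D → Set Q) (hα : Monotone α) (hγ : Monotone γ)
    (hgc : ∀ (c : Set Q) (d : D), α c ≤ d ↔ c ⊆ γ d)
    -- description relation and abstract system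
    (R : X → Y → Prop) (fabs : Y → (Y → D) → D)
    -- all right-hand sides respect the description relation
    (hrespect : ∀ x y, R x y → ∀ (σ : X → Set Q) (σs : Y → D),
      (∀ x' y', R x' y' → σ x' ⊆ γ (σs y')) → f x σ ⊆ γ (fabs y σs))
    -- `σ` is the least solution of the concrete system
    (σ : X → Set Q) (hfix : ∀ x, σ x = f x σ)
    (hleast : ∀ σ' : X → Set Q, (∀ x, σ' x = f x σ') → σ ≤ σ')
    -- `σ♯` is a post-solution of the lower monotonization of the abstract system
    (σs : Y → D) (hpost : ∀ y, lowerMono (fabs y) σs ≤ σs y) :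
    ∀ x y, R x y → σ x ⊆ γ (σs y) := by
  set σ' : X → Set Q := fun x => ⋂ y, ⋂ _ : R x y, γ (σs y) with hσ'def
  have hrel : ∀ x' y', R x' y' → σ' x' ⊆ γ (σs y') := by
    intro x' y' h'
    exact (Set.iInter_subset _ y').trans (Set.iInter_subset _ h')
  have hpref : ∀ x, f x σ' ⊆ σ' x := by
    intro x
    apply Set.subset_iInter; intro y
    apply Set.subset_iInter; intro hxy
    have h1 : f x σ' ⊆ γ (lowerMono (fabs y) σs) := by
      rw [← hgc]
      unfold lowerMono
      refine le_iInf fun τ => le_iInf fun hτ => ?_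
      rw [hgc]
      exact hrespect x y hxy σ' τ fun x' y' h' => (hrel x' y' h').trans (hγ (hτ y'))
    exact h1.trans (hγ (hpost y))
  let F : (X → Set Q) →o (X → Set Q) :=
    ⟨fun τ x => f x τ, fun a b hab x => hmono x hab⟩
  have hlfp : σ ≤ OrderHom.lfp F :=
    hleast _ (fun x => (congrFun (OrderHom.map_lfp F) x).symm)
  have h2 : OrderHom.lfp F ≤ σ' := OrderHom.lfp_le F (fun x => hpref x)
  intro x y hxy
  exact ((hlfp.trans h2) x).trans (hrel x y hxy)
end

section
/- Let σ be the least solution of the concrete system and assume all concrete and abstract right-hand sides respect the description relation R. Then every post-solution σ♯ of the abstract system (i.e., every σ♯ with f♯ y σ♯ ≤ σ♯ y for all y) is sound, that is, σ R* σ♯ holds. -/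
/-- If `σ` is the least solution of the concrete system `x = f x` and all
right-hand sides respect the description relation, then every post-solution
`σ♯` of the abstract system is sound, i.e. `σ R* σ♯`. -/
theorem sound_of_post_solution {X Y Q : Type*} {D : Type*} [CompleteLattice D]
    -- concrete system with monotone right-hand sides
    (f : X → (X → Set Q) → Set Q) (hmono : ∀ x, Monotone (f x))
    -- Galois connection between `Set Q` and `D`
    (α : Set Q → D) (γ : D → Set Q) (hα : Monotone α) (hγ : Monotone γ)
    (hgc : ∀ (c : Set Q) (d : D), α c ≤ d ↔ c ⊆ γ d)
    -- description relation and abstract system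
    (R : X → Y → Prop) (fabs : Y → (Y → D) → D)
    -- all right-hand sides respect the description relation
    (hrespect : ∀ x y, R x y → ∀ (σ : X → Set Q) (σs : Y → D),
      (∀ x' y', R x' y' → σ x' ⊆ γ (σs y')) → f x σ ⊆ γ (fabs y σs))
    -- `σ` is the least solution of the concrete system
    (σ : X → Set Q) (hfix : ∀ x, σ x = f x σ)
    (hleast : ∀ σ' : X → Set Q, (∀ x, σ' x = f x σ') → σ ≤ σ')
    -- `σ♯` is a post-solution of the abstract system
    (σs : Y → D) (hpost : ∀ y, fabs y σs ≤ σs y) :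
    ∀ x y, R x y → σ x ⊆ γ (σs y) := by
  -- the monotone functional
  set F : (X → Set Q) →o (X → Set Q) :=
    ⟨fun σ' x => f x σ', fun a b hab x => hmono x hab⟩ with hF
  -- σ equals the least fixed point of F
  have hlfp : σ = OrderHom.lfp F := by
    apply le_antisymm
    · exact hleast _ (fun x => congrFun (OrderHom.map_lfp F).symm x)
    · exact OrderHom.lfp_le_fixed F (funext fun x => (hfix x).symm)
  -- the invariant assignment
    -- p x = intersection of γ (σs y) over all y with R x y
  set p : X → Set Q := fun x => ⋂ y ∈ {y | R x y}, γ (σs y) with hp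
  have hpR : ∀ x' y', R x' y' → p x' ⊆ γ (σs y') := by
    intro x' y' h
    exact Set.biInter_subset_of_mem h
  have hFp : F p ≤ p := by
    intro x
    simp only [hp]
    apply Set.subset_iInter₂
    intro y hy
    exact (hrespect x y hy p σs hpR).trans (hγ (hpost y))
  have hσp : σ ≤ p := hlfp ▸ OrderHom.lfp_le F hFp
  intro x y hR
  exact (hσp x).trans (hpR x y hR)
end

section
/- Assume all concrete and abstract right-hand sides respect the description relation R, and let σ : X → Set Q and σ♯ : Y → D be assignments with σ R* σ♯. Then for all variables x ∈ X and y ∈ Y with x R y, one has f x σ ⊆ γ (f̲♯ y σ♯), where f̲♯ y denotes the lower monotonization of the abstract right-hand side f♯ y. -/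
/-- If all right-hand sides respect the description relation and `σ R* σ♯`,
then for all `x R y` we have `f x σ ⊆ γ (f̲♯ y σ♯)` where `f̲♯ y` is the lower
monotonization of the abstract right-hand side `f♯ y`. -/
theorem concrete_le_gamma_lowerMono {X Y Q : Type*} {D : Type*} [CompleteLattice D]
    -- concrete system with monotone right-hand sides
    (f : X → (X → Set Q) → Set Q) (hmono : ∀ x, Monotone (f x))
    -- Galois connection between `Set Q` and `D`
    (α : Set Q → D) (γ : D → Set Q) (hα : Monotone α) (hγ : Monotone γ)
    (hgc : ∀ (c : Set Q) (d : D), α c ≤ d ↔ c ⊆ γ d)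
    -- description relation and abstract system
    (R : X → Y → Prop) (fabs : Y → (Y → D) → D)
    -- all right-hand sides respect the description relation
    (hrespect : ∀ x y, R x y → ∀ (σ : X → Set Q) (σs : Y → D),
      (∀ x' y', R x' y' → σ x' ⊆ γ (σs y')) → f x σ ⊆ γ (fabs y σs))
    -- assignments related by the lifted description relation
    (σ : X → Set Q) (σs : Y → D)
    (hR : ∀ x y, R x y → σ x ⊆ γ (σs y)) :
    ∀ x y, R x y → f x σ ⊆ γ (lowerMono (fabs y) σs) := by
  intro x y hxy
  rw [← hgc]
  apply le_iInf; intro σ'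
  apply le_iInf; intro hσ'
  rw [hgc]
  exact hrespect x y hxy σ σ' (fun x' y' h => (hR x' y' h).trans (hγ (hσ' y')))
end

section
/- Let t be a computation tree over variables Y and complete lattice D, and let σ, σ' : Y → D be assignments that agree on every variable in treedep(t, σ), i.e., σ y = σ' y for all y ∈ treedep(t, σ). Then treedep(t, σ') = treedep(t, σ) and ⟦t⟧ σ' = ⟦t⟧ σ. -/
/-- Computation trees over variables `Y` and values `D`: either an answer,
or a query of a variable together with a continuation. -/
inductive CTree (Y D : Type*) where
  | answer : D → CTree Y D
  | query : Y → (D → CTree Y D) → CTree Y D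

/-- The function `⟦t⟧ : (Y → D) → D` denoted by a computation tree. -/
def CTree.sem {Y D : Type*} : CTree Y D → (Y → D) → D
  | .answer d, _ => d
  | .query y c, σ => (c (σ y)).sem σ

/-- The dependence set `treedep(t, σ)` of a computation tree `t` under an
assignment `σ`. -/
def CTree.dep {Y D : Type*} : CTree Y D → (Y → D) → Set Y
  | .answer _, _ => ∅
  | .query y c, σ => {y} ∪ (c (σ y)).dep σ

/-- If two assignments agree on every variable in `treedep(t, σ)`, then the
dependence sets and the values of `t` under the two assignments coincide. -/
theorem CTree.dep_sem_eq_of_agree {Y : Type*} {D : Type*} [CompleteLattice D]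
    (t : CTree Y D) (σ σ' : Y → D)
    (h : ∀ y ∈ t.dep σ, σ y = σ' y) :
    t.dep σ' = t.dep σ ∧ t.sem σ' = t.sem σ := by
  induction t with
  | answer d => simp [CTree.dep, CTree.sem]
  | query y c ih =>
    have hy : σ y = σ' y := h y (by simp [CTree.dep])
    have h' : ∀ z ∈ (c (σ y)).dep σ, σ z = σ' z := fun z hz =>
      h z (Or.inr hz)
    obtain ⟨hd, hs⟩ := ih (σ y) h'
    constructor
    · simp [CTree.dep, ← hy, hd]
    · simp [CTree.sem, ← hy, hs]
end

section
/- Assume the abstract system simulates the concrete system relative to the description relation R, and let σ be the least solution of the concrete system. Let Y' ⊆ Y and σ♯ : Y → D be such that (1) the partial assignment is closed, i.e., for every y ∈ Y', treedep(t_y, ⊤⊕σ♯) ⊆ Y', where ⊤⊕σ♯ maps y to σ♯ y if y ∈ Y' and to ⊤ otherwise; and (2) ⊤⊕σ♯ is a post-solution of the lower monotonization of the abstract system, i.e., f̲♯ y (⊤⊕σ♯) ≤ (⊤⊕σ♯) y for all y ∈ Y. Then the set X' = { x ∈ X | ∃ y ∈ Y', x R y } is σ-closed, i.e., for every x ∈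 X', dep x σ ⊆ X'. -/
/-- If the abstract system simulates the concrete system relative to `R`,
`σ` is the least solution of the concrete system, and `σ♯ : Y' → D` is a
closed partial assignment such that `⊤⊕σ♯` is a post-solution of the lower
monotonization of the abstract system, then the set
`X' = { x | ∃ y ∈ Y', x R y }` is `σ`-closed. -/
theorem closed_of_closed_partial_post {X Y Q : Type*} {D : Type*} [CompleteLattice D]
    -- concrete system with monotone right-hand sides and dependence sets
    (f : X → (X → Set Q) → Set Q) (hmono : ∀ x, Monotone (f x))
    (dep : X → (X → Set Q) → Set X)
    (hdep : ∀ x (σ σ' : X → Set Q), (∀ z ∈ dep x σ, σ z = σ' z) → f x σ = f x σ')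
    -- Galois connection between `Set Q` and `D`
    (α : Set Q → D) (γ : D → Set Q) (hα : Monotone α) (hγ : Monotone γ)
    (hgc : ∀ (c : Set Q) (d : D), α c ≤ d ↔ c ⊆ γ d)
    -- description relation and abstract system given by computation trees
    (R : X → Y → Prop) (t : Y → CTree Y D)
    -- the abstract system simulates the concrete one relative to `R`
    (hsim : ∀ x y, R x y → ∀ (σ : X → Set Q) (σs : Y → D),
      (∀ x' y', R x' y' → σ x' ⊆ γ (σs y')) →
        f x σ ⊆ γ ((t y).sem σs) ∧ (∀ x' ∈ dep x σ, ∃ y' ∈ (t y).dep σs, R x' y'))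
    -- `σ` is the least solution of the concrete system
    (σ : X → Set Q) (hfix : ∀ x, σ x = f x σ)
    (hleast : ∀ σ' : X → Set Q, (∀ x, σ' x = f x σ') → σ ≤ σ')
    -- partial assignment `σ♯` with domain `Y'`, and `τ = ⊤⊕σ♯`
    (Y' : Set Y) (σs : Y → D) (τ : Y → D)
    (hτ₁ : ∀ y ∈ Y', τ y = σs y) (hτ₂ : ∀ y ∉ Y', τ y = ⊤)
    -- (1) the partial assignment is closed
    (hclosed : ∀ y ∈ Y', (t y).dep τ ⊆ Y')
    -- (2) `⊤⊕σ♯` is a post-solution of the lower monotonization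
    (hpost : ∀ y, lowerMono (fun ρ => (t y).sem ρ) τ ≤ τ y) :
    ∀ x ∈ {x | ∃ y ∈ Y', R x y}, dep x σ ⊆ {x | ∃ y ∈ Y', R x y} := by
  -- the monotone operator of the concrete system
  set F : (X → Set Q) →o (X → Set Q) :=
    ⟨fun ρ x => f x ρ, fun ρ ρ' h x => hmono x h⟩ with hF
  -- σ is the least fixed point
  have hσlfp : σ = OrderHom.lfp F := by
    apply le_antisymm
    · refine hleast _ ?_
      intro x
      have := OrderHom.map_lfp F
      exact (congrFun this x).symm
    · exact OrderHom.lfp_le F (fun x => (hfix x).ge)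
  -- the invariant
  set m : X → Set Q := fun x => ⋂ y, ⋂ (_ : R x y), γ (τ y) with hm
  have hpre : F (σ ⊓ m) ≤ σ ⊓ m := by
    intro x
    refine le_inf ?_ ?_
    · calc f x (σ ⊓ m) ⊆ f x σ := hmono x inf_le_left
        _ = σ x := (hfix x).symm
    · simp only [hm, Set.le_iff_subset, Set.subset_iInter_iff]
      intro y hxy
      have key : f x (σ ⊓ m) ⊆ γ (lowerMono (fun ρ => (t y).sem ρ) τ) := by
        rw [← hgc]
        refine le_iInf₂ fun ρ hρ => ?_
        rw [hgc]
        refine (hsim x y hxy (σ ⊓ m) ρ ?_).1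
        intro x' y' hR s hs
        have : s ∈ m x' := hs.2
        have : s ∈ γ (τ y') := by
          simp only [hm, Set.mem_iInter] at this
          exact this y' hR
        exact hγ (hρ y') this
      exact key.trans (hγ (hpost y))
  have hle : σ ≤ σ ⊓ m := hσlfp.trans_le (OrderHom.lfp_le F hpre)
  have hRstar : ∀ x' y', R x' y' → σ x' ⊆ γ (τ y') := by
    intro x' y' hR s hs
    have : s ∈ m x' := (hle x' hs).2
    simp only [hm, Set.mem_iInter] at this
    exact this y' hR
  rintro x ⟨y, hy, hxy⟩ x' hx'
  obtain ⟨y', hy', hR⟩ := (hsim x y hxy σ τ hRstar).2 x' hx'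
  exact ⟨y', hclosed y hy hy', hR⟩
end

section
/- Let D be a complete lattice, Y a type of variables, and f♯ : Y → (Y → D) → D an abstract system (not necessarily monotone). Let σ : Y → D be a post-solution of the lower monotonization, i.e., f̲♯ y σ ≤ σ y for all y. Then for every variable y₀ ∈ Y and every value d with σ y₀ ⊓ f♯ y₀ σ ≤ d ≤ σ y₀, the updated assignment σ[y₀ ↦ d] (which maps y₀ to d and agrees with σ elsewhere) is again a post-solution of the lower monotonization. -/
/-- Post-solutions of the lower monotonization are preserved by updating one
variable `y₀` with any value `d` satisfying `σ y₀ ⊓ f♯ y₀ σ ≤ d ≤ σ y₀`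
(e.g. by a narrowing update). -/
theorem post_lowerMono_update {Y D : Type*} [CompleteLattice D] [DecidableEq Y]
    (fabs : Y → (Y → D) → D) (σ : Y → D)
    (hpost : ∀ y, lowerMono (fabs y) σ ≤ σ y)
    (y₀ : Y) (d : D) (hd₁ : σ y₀ ⊓ fabs y₀ σ ≤ d) (hd₂ : d ≤ σ y₀) :
    ∀ y, lowerMono (fabs y) (Function.update σ y₀ d) ≤ Function.update σ y₀ d y := by
  intro y
  have hle : Function.update σ y₀ d ≤ σ := by
    intro z
    by_cases hz : z = y₀
    · subst hz; simp [hd₂]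
    · simp [Function.update_of_ne hz]
  have hmono : ∀ g : (Y → D) → D, lowerMono g (Function.update σ y₀ d) ≤ lowerMono g σ := by
    intro g
    apply le_iInf₂
    intro τ hτ
    exact biInf_le _ (le_trans hle hτ)
  have hmem : lowerMono (fabs y) (Function.update σ y₀ d) ≤ fabs y σ :=
    biInf_le _ hle
  by_cases hy : y = y₀
  · subst hy
    simp only [Function.update_self]
    exact le_trans (le_inf (le_trans (hmono _) (hpost y)) hmem) hd₁
  · rw [Function.update_of_ne hy]
    exact le_trans (hmono _) (hpost y)
end

section
/- Let D be a complete lattice, Y a type of variables, and f♯ : Y → (Y → D) → D an abstract system in which every right-hand side f♯ y is monotone. Let △ : D → D → D satisfy a ⊓ b ≤ a △ b ≤ a for all a, b. If σ : Y → D is a post-solution of the abstract system (f♯ y σ ≤ σ y for all y), then for every y₀ ∈ Y the updated assignment σ[y₀ ↦ σ y₀ △ f♯ y₀ σ] is again a post-solution of the abstract system. -/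
/-- For a monotone abstract system, post-solutions are preserved by a
narrowing update of a single variable. -/
theorem post_solution_narrow_update {Y D : Type*} [CompleteLattice D] [DecidableEq Y]
    (fabs : Y → (Y → D) → D) (hmono : ∀ y, Monotone (fabs y))
    (nar : D → D → D)
    (hnar₁ : ∀ a b, a ⊓ b ≤ nar a b) (hnar₂ : ∀ a b, nar a b ≤ a)
    (σ : Y → D) (hpost : ∀ y, fabs y σ ≤ σ y) (y₀ : Y) :
    ∀ y, fabs y (Function.update σ y₀ (nar (σ y₀) (fabs y₀ σ))) ≤
      Function.update σ y₀ (nar (σ y₀) (fabs y₀ σ)) y := by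
  have hle : Function.update σ y₀ (nar (σ y₀) (fabs y₀ σ)) ≤ σ := by
    intro y
    by_cases h : y = y₀
    · subst h; simp [Function.update_self]; exact (hnar₂ _ _)
    · simp [Function.update_of_ne h]
  intro y
  have key : fabs y (Function.update σ y₀ (nar (σ y₀) (fabs y₀ σ))) ≤ fabs y σ :=
    hmono y hle
  by_cases h : y = y₀
  · subst h
    simp only [Function.update_self]
    exact le_trans (le_trans key (le_inf (hpost _) le_rfl)) (hnar₁ _ _)
  · simp only [Function.update_of_ne h]
    exact le_trans key (hpost y)
end

section
/- Let D be a complete lattice, ∇ : D → D → D an operator with a ⊔ b ≤ a ∇ b for all a, b, and △ : D → D → D an operator with a ⊓ b ≤ a △ b ≤ a for all a, b. Define the warrowing operator by a ⊛ b = if b ≤ a then a △ b else a ∇ b. Then for any abstract system f♯ : Y → (Y → D) → D over a type Y of variables, every assignment σ : Y → D satisfying σ y = (σ y) ⊛ (f♯ y σ) for all y ∈ Y is a post-solution of the abstract system, i.e., f♯ y σ ≤ σ y for all y. -/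
open Classical in
/-- Any assignment that is a fixpoint of warrowing updates, i.e. satisfies
`σ y = (σ y) ⊛ (f♯ y σ)` for all `y` where `a ⊛ b = if b ≤ a then a △ b else a ∇ b`,
is a post-solution of the abstract system. -/
theorem warrowing_fixpoint_is_post_solution {Y D : Type*} [CompleteLattice D]
    (wid nar : D → D → D)
    (hwid : ∀ a b, a ⊔ b ≤ wid a b)
    (hnar₁ : ∀ a b, a ⊓ b ≤ nar a b) (hnar₂ : ∀ a b, nar a b ≤ a)
    (fabs : Y → (Y → D) → D) (σ : Y → D)
    (hfix : ∀ y, σ y =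
      if fabs y σ ≤ σ y then nar (σ y) (fabs y σ) else wid (σ y) (fabs y σ)) :
    ∀ y, fabs y σ ≤ σ y := by
  intro y
  by_cases h : fabs y σ ≤ σ y
  · exact h
  · exfalso
    apply h
    calc fabs y σ ≤ σ y ⊔ fabs y σ := le_sup_right
      _ ≤ wid (σ y) (fabs y σ) := hwid _ _
      _ = σ y := ((hfix y).trans (if_neg h)).symm
end
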